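/- arXiv:2402.18015 — 4 statements merged into one kernel-verified Lean document; each statement's English description precedes it below -/
import Mathlib

section
/- (Theorem 2, correctness of the ε-discarding test) Fix integers n, m ≥ 1, a set Ω ⊆ ℝ^n, a map F : ℝ^n → ℝ^m, a real ε with 0 ≤ ε ≤ 1, a subset B ⊆ ℝ^n, and a vector l ∈ ℝ^m satisfying l_i ≤ F(x)_i for all x ∈ B and all i. If there exists u ∈ F(Ω) with u ≤_ε l, then no point of B ∩ Ω is an ε-properly Pareto optimal solution. -/
/-- The linear map `T_ε`: `(T_ε y)_i = y_i + ε · Σ_{j ≠ i} y_j`. -/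
noncomputable def Tmap (m : ℕ) (ε : ℝ) (y : Fin m → ℝ) : Fin m → ℝ :=
  fun i => y i + ε * ∑ j ∈ Finset.univ.erase i, y j

/-- The cone `C_ε = {y : (T_ε y)_i ≥ 0 for all i}`. -/
def Ceps (m : ℕ) (ε : ℝ) : Set (Fin m → ℝ) :=
  {y | ∀ i, 0 ≤ Tmap m ε y i}

/-- `y¹ ≤_ε y²` iff `y² − y¹ ∈ C_ε \ {0}`. -/
def leps (m : ℕ) (ε : ℝ) (y1 y2 : Fin m → ℝ) : Prop :=
  y2 - y1 ∈ Ceps m ε \ {0}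

/-- `x* ∈ Ω` is an ε-properly Pareto optimal solution iff
`(F(x*) − (C_ε \ {0})) ∩ F(Ω) = ∅`. -/
def ProperlyOptimal (n m : ℕ) (ε : ℝ) (Ω : Set (Fin n → ℝ))
    (F : (Fin n → ℝ) → (Fin m → ℝ)) (x : Fin n → ℝ) : Prop :=
  x ∈ Ω ∧ ((fun d => F x - d) '' (Ceps m ε \ {0})) ∩ (F '' Ω) = ∅

lemma Tmap_add (m : ℕ) (ε : ℝ) (a b : Fin m → ℝ) (i : Fin m) :
    Tmap m ε (a + b) i = Tmap m ε a i + Tmap m ε b i := by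
  simp only [Tmap, Pi.add_apply, Finset.sum_add_distrib]; ring

lemma Tmap_nonneg_of_nonneg (m : ℕ) (ε : ℝ) (hε : 0 ≤ ε) (y : Fin m → ℝ)
    (hy : ∀ i, 0 ≤ y i) (i : Fin m) : 0 ≤ Tmap m ε y i := by
  have : 0 ≤ ∑ j ∈ Finset.univ.erase i, y j :=
    Finset.sum_nonneg fun j _ => hy j
  have := mul_nonneg hε this
  simp only [Tmap]
  nlinarith [hy i]

lemma nonpos_in_cone_eq_zero (m : ℕ) (hm : 1 ≤ m) (ε : ℝ) (hε : 0 ≤ ε) (y : Fin m → ℝ)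
    (hy : ∀ i, y i ≤ 0) (hc : ∀ i, 0 ≤ Tmap m ε y i) : y = 0 := by
  have hS : ∑ i, y i ≤ 0 := Finset.sum_nonpos fun i _ => hy i
  have hsum : 0 ≤ ∑ i, Tmap m ε y i := Finset.sum_nonneg fun i _ => hc i
  have hcalc : ∑ i, Tmap m ε y i
      = (∑ i, y i) + ε * ((m : ℝ) * (∑ i, y i) - (∑ i, y i)) := by
    simp only [Tmap]
    rw [Finset.sum_add_distrib, ← Finset.mul_sum]
    congr 1
    congr 1
    have : ∀ i : Fin m, ∑ j ∈ Finset.univ.erase i, y j = (∑ j, y j) - y i := by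
      intro i
      rw [Finset.sum_erase_eq_sub (Finset.mem_univ i)]
    simp only [this, Finset.sum_sub_distrib, Finset.sum_const, Finset.card_univ,
      Fintype.card_fin, nsmul_eq_mul]
  rw [hcalc] at hsum
  have hm1 : (1 : ℝ) ≤ (m : ℝ) := by exact_mod_cast hm
  have hfac : ε * ((m : ℝ) * (∑ i, y i) - (∑ i, y i)) ≤ 0 := by
    have h2 : ((m : ℝ) - 1) * (∑ i, y i) ≤ 0 :=
      mul_nonpos_of_nonneg_of_nonpos (by linarith) hS
    have := mul_nonneg hε (by linarith : (0:ℝ) ≤ -(((m : ℝ) - 1) * (∑ i, y i)))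
    nlinarith
  have hS0 : ∑ i, y i = 0 := by linarith
  have := (Finset.sum_eq_zero_iff_of_nonpos (fun i _ => hy i)).mp hS0
  funext i
  exact this i (Finset.mem_univ i)

/-- Theorem 2, correctness of the ε-discarding test: if `l` is a
lower bound of `F` on the box `B` and some `u ∈ F(Ω)` satisfies `u ≤_ε l`,
then no point of `B ∩ Ω` is ε-properly Pareto optimal. -/
theorem stmt_8 (n m : ℕ) (hn : 1 ≤ n) (hm : 1 ≤ m)
    (Ω : Set (Fin n → ℝ)) (F : (Fin n → ℝ) → (Fin m → ℝ))
    (ε : ℝ) (hε0 : 0 ≤ ε) (hε1 : ε ≤ 1)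
    (B : Set (Fin n → ℝ)) (l : Fin m → ℝ)
    (hl : ∀ x ∈ B, ∀ i, l i ≤ F x i)
    (hu : ∃ u ∈ F '' Ω, leps m ε u l) :
    ∀ x ∈ B ∩ Ω, ¬ ProperlyOptimal n m ε Ω F x := by
  obtain ⟨u, huΩ, hluC, hlu0⟩ := hu
  rintro x ⟨hxB, hxΩ⟩ ⟨-, hempty⟩
  -- the direction d = F x - u
  have hsplit : F x - u = (F x - l) + (l - u) := by abel
  have hFl : ∀ i, 0 ≤ (F x - l) i := fun i => by
    simpa using sub_nonneg.mpr (hl x hxB i)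
  have hdC : F x - u ∈ Ceps m ε := by
    intro i
    rw [hsplit, Tmap_add]
    exact add_nonneg (Tmap_nonneg_of_nonneg m ε hε0 _ hFl i) (hluC i)
  have hd0 : F x - u ≠ 0 := by
    intro h
    have hufx : u = F x := by
      have := sub_eq_zero.mp h; exact this.symm
    have hlu_nonpos : ∀ i, (l - u) i ≤ 0 := fun i => by
      simp [hufx, sub_nonpos.mpr (hl x hxB i)]
    exact hlu0 (nonpos_in_cone_eq_zero m hm ε hε0 _ hlu_nonpos hluC)
  have : u ∈ ((fun d => F x - d) '' (Ceps m ε \ {0})) ∩ (F '' Ω) := by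
    refine ⟨⟨F x - u, ⟨hdC, hd0⟩, by show F x - (F x - u) = u; abel⟩, huΩ⟩
  rw [hempty] at this
  exact this
end

section
/- (Theorem 4, core claim) Fix integers n, m ≥ 1, a set Ω ⊆ ℝ^n, a map F : ℝ^n → ℝ^m, a real ε with 0 ≤ ε ≤ 1, a subset B ⊆ ℝ^n, and a vector l ∈ ℝ^m satisfying l_i ≤ F(x)_i for all x ∈ B and all i. If B ∩ Ω contains an ε-properly Pareto optimal solution, then there is no u ∈ F(Ω) with u ≤_ε l; i.e., a box containing an ε-properly Pareto optimal solution is never removed by the ε-discarding test. -/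
/-- Theorem 4, core claim: if `l` is a lower bound of `F` on the
box `B` and `B ∩ Ω` contains an ε-properly Pareto optimal solution, then there
is no `u ∈ F(Ω)` with `u ≤_ε l`: such a box is never discarded. -/
theorem stmt_9 (n m : ℕ) (hn : 1 ≤ n) (hm : 1 ≤ m)
    (Ω : Set (Fin n → ℝ)) (F : (Fin n → ℝ) → (Fin m → ℝ))
    (ε : ℝ) (hε0 : 0 ≤ ε) (hε1 : ε ≤ 1)
    (B : Set (Fin n → ℝ)) (l : Fin m → ℝ)
    (hl : ∀ x ∈ B, ∀ i, l i ≤ F x i)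
    (hex : ∃ x ∈ B ∩ Ω, ProperlyOptimal n m ε Ω F x) :
    ¬ ∃ u ∈ F '' Ω, leps m ε u l := by
  rintro ⟨u, huFΩ, hCl, hne⟩
  obtain ⟨x, ⟨hxB, hxΩ⟩, _, hemp⟩ := hex
  -- the candidate direction
  have hnonneg : ∀ i, 0 ≤ F x i - l i := fun i => sub_nonneg.2 (hl x hxB i)
  have hTadd : ∀ (a b : Fin m → ℝ) i,
      Tmap m ε (a + b) i = Tmap m ε a i + Tmap m ε b i := by
    intro a b i
    simp [Tmap, Finset.sum_add_distrib, mul_add]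
    ring
  have hTnonneg : ∀ (a : Fin m → ℝ), (∀ i, 0 ≤ a i) → ∀ i, 0 ≤ Tmap m ε a i := by
    intro a ha i
    have : 0 ≤ ∑ j ∈ Finset.univ.erase i, a j :=
      Finset.sum_nonneg fun j _ => ha j
    have := mul_nonneg hε0 this
    simpa [Tmap] using add_nonneg (ha i) this
  set d : Fin m → ℝ := F x - u with hd
  have hdecomp : d = (F x - l) + (l - u) := by
    funext i; simp [hd]
  have hdC : d ∈ Ceps m ε := by
    intro i
    rw [hdecomp, hTadd]
    exact add_nonneg (hTnonneg _ hnonneg i) (hCl i)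
  have hd0 : d ≠ 0 := by
    intro h0
    -- then l - u = -(F x - l), i.e. l - u ≤ 0 componentwise
    have hul : l - u = -(F x - l) := by
      have : F x = u := by
        funext i
        have := congrFun h0 i
        simpa [hd, sub_eq_zero] using this
      rw [this]; ext i; simp
    -- each component of l - u is ≤ 0
    have hle0 : ∀ i, (l - u) i ≤ 0 := by
      intro i
      rw [hul]
      simpa using hnonneg i
    -- but l - u ∈ Ceps, so each component is 0
    have hzero : l - u = 0 := by
      funext i
      have hT := hCl i
      have hsum : ∑ j ∈ Finset.univ.erase i, (l - u) j ≤ 0 :=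
        Finset.sum_nonpos fun j _ => hle0 j
      have hεsum : ε * ∑ j ∈ Finset.univ.erase i, (l - u) j ≤ 0 :=
        mul_nonpos_of_nonneg_of_nonpos hε0 hsum
      have : (l - u) i + ε * ∑ j ∈ Finset.univ.erase i, (l - u) j ≤ 0 :=
        add_nonpos (hle0 i) hεsum
      have hTeq : (l - u) i + ε * ∑ j ∈ Finset.univ.erase i, (l - u) j = 0 :=
        le_antisymm this hT
      have : (l - u) i = 0 := le_antisymm (hle0 i)
        (by nlinarith [hle0 i, hεsum])
      simpa using this
    exact hne hzero
  have : u ∈ ((fun d => F x - d) '' (Ceps m ε \ {0})) ∩ (F '' Ω) := by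
    refine ⟨⟨d, ⟨hdC, hd0⟩, by simp [hd]⟩, huFΩ⟩
  rw [hemp] at this
  exact this
end

section
/- (Key inequality (3.3) in Theorem 3) Fix integers n, m ≥ 1 and functions f_1,…,f_m : ℝ^n → ℝ, each f_i Lipschitz with constant L_i ≥ 0 (Euclidean norm); set L = (L_1,…,L_m) and F = (f_1,…,f_m). Let B_1,…,B_N ⊆ ℝ^n be finitely many boxes, each of diameter ‖ω(B_j)‖ ≤ ω, and let l^j ∈ ℝ^m be defined by l^j_i = f_i(m(B_j)) − (L_i/2)·‖ω(B_j)‖. Let 𝒰 ⊆ ℝ^m be a finite nonempty set such that every u ∈ 𝒰 equals F(x) for some x lying in some box B_j. Then the directed Hausdorff distance from 𝒰 to ℒ = {l^1,…,l^N} satisfies d_h(𝒰, ℒ) = max_{u∈𝒰} min_{l∈ℒ} ‖u − l‖ ≤ ω·‖L‖. -/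
lemma aux_norm_le_of_abs_le {m : ℕ} (v w : EuclideanSpace ℝ (Fin m))
    (h : ∀ i, |v i| ≤ |w i|) : ‖v‖ ≤ ‖w‖ := by
  rw [EuclideanSpace.norm_eq, EuclideanSpace.norm_eq]
  apply Real.sqrt_le_sqrt
  apply Finset.sum_le_sum
  intro i _
  simp only [Real.norm_eq_abs]
  exact pow_le_pow_left₀ (abs_nonneg _) (h i) 2

/-- key inequality (3.3): with `f_i` Lipschitz with constant
`L_i ≥ 0`, `F = (f_1,…,f_m)`, boxes `B_1,…,B_N` of diameter at most `ω`,
Lipschitz lower bounds `l^j_i = f_i(m(B_j)) − (L_i/2)·‖ω(B_j)‖`, and a finite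
nonempty set `𝒰` whose every element is `F(x)` for some `x` in some box, the
directed Hausdorff distance satisfies
`d_h(𝒰, ℒ) = max_{u∈𝒰} min_j ‖u − l^j‖ ≤ ω·‖L‖`. -/
theorem stmt_13 (n m N : ℕ) (hn : 1 ≤ n) (hm : 1 ≤ m) (hN : 0 < N)
    (f : Fin m → EuclideanSpace ℝ (Fin n) → ℝ)
    (L : EuclideanSpace ℝ (Fin m)) (hL : ∀ i, 0 ≤ L i)
    (hLip : ∀ i x y, |f i x - f i y| ≤ L i * ‖x - y‖)
    (F : EuclideanSpace ℝ (Fin n) → EuclideanSpace ℝ (Fin m))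
    (hF : ∀ x i, F x i = f i x)
    (a b : Fin N → EuclideanSpace ℝ (Fin n)) (hab : ∀ j k, a j k ≤ b j k)
    (ω : ℝ) (hω : ∀ j, ‖b j - a j‖ ≤ ω)
    (l : Fin N → EuclideanSpace ℝ (Fin m))
    (hl : ∀ j i, l j i = f i ((1 / 2 : ℝ) • (a j + b j)) - L i / 2 * ‖b j - a j‖)
    (U : Finset (EuclideanSpace ℝ (Fin m))) (hU : U.Nonempty)
    (hUmem : ∀ u ∈ U, ∃ (j : Fin N) (x : EuclideanSpace ℝ (Fin n)),
      (∀ k, a j k ≤ x k ∧ x k ≤ b j k) ∧ u = F x) :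
    U.sup' hU (fun u =>
        Finset.univ.inf' ⟨⟨0, hN⟩, Finset.mem_univ _⟩ fun j => ‖u - l j‖)
      ≤ ω * ‖L‖ := by
  have hω0 : 0 ≤ ω := le_trans (norm_nonneg _) (hω ⟨0, hN⟩)
  apply Finset.sup'_le
  intro u hu
  obtain ⟨j, x, hx, hux⟩ := hUmem u hu
  refine le_trans (Finset.inf'_le _ (Finset.mem_univ j)) ?_
  set mid := (1 / 2 : ℝ) • (a j + b j) with hmid_def
  set d := ‖b j - a j‖ with hd_def
  have hd0 : 0 ≤ d := norm_nonneg _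
  -- midpoint bound
  have hmid : ‖x - mid‖ ≤ d / 2 := by
    have h1 : ‖x - mid‖ ≤ ‖(1 / 2 : ℝ) • (b j - a j)‖ := by
      apply aux_norm_le_of_abs_le
      intro k
      have h2 := (hx k).1
      have h3 := (hx k).2
      have hxm : (x - mid) k = x k - (1 / 2 : ℝ) * (a j k + b j k) := by
        simp only [hmid_def, PiLp.sub_apply, PiLp.smul_apply, PiLp.add_apply,
          smul_eq_mul]
      have hw : ((1 / 2 : ℝ) • (b j - a j)) k = (1 / 2 : ℝ) * (b j k - a j k) := by
        simp [PiLp.smul_apply, PiLp.sub_apply, smul_eq_mul]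
      rw [hxm, hw]
      rw [abs_le]
      constructor
      · have : |(1 / 2 : ℝ) * (b j k - a j k)| = (1 / 2 : ℝ) * (b j k - a j k) := by
          rw [abs_of_nonneg]; nlinarith [hab j k]
        rw [this]; linarith
      · refine le_trans ?_ (le_abs_self _)
        linarith
    have h4 : ‖(1 / 2 : ℝ) • (b j - a j)‖ = d / 2 := by
      rw [norm_smul]
      simp [hd_def]
      ring
    linarith
  -- coordinatewise bound on u - l j
  have key : ‖u - l j‖ ≤ ‖ω • L‖ := by
    apply aux_norm_le_of_abs_le
    intro i
    have hui : u i = f i x := by rw [hux, hF]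
    have hli := hl j i
    have hlip := hLip i x mid
    have h5 : L i * ‖x - mid‖ ≤ L i * (d / 2) :=
      mul_le_mul_of_nonneg_left hmid (hL i)
    have h6 : L i * d ≤ L i * ω := mul_le_mul_of_nonneg_left (hω j) (hL i)
    have h7 : (u - l j) i = u i - l j i := by simp [PiLp.sub_apply]
    have h8 : ((ω : ℝ) • L) i = ω * L i := by simp [PiLp.smul_apply, smul_eq_mul]
    rw [h7, h8, hui, hli]
    have h9 : |ω * L i| = ω * L i := abs_of_nonneg (mul_nonneg hω0 (hL i))
    rw [h9, abs_le]
    rcases abs_le.1 hlip with ⟨ha1, ha2⟩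
    constructor
    · nlinarith
    · nlinarith
  have h10 : ‖(ω : ℝ) • L‖ = ω * ‖L‖ := by
    rw [norm_smul, Real.norm_eq_abs, abs_of_nonneg hω0]
  linarith
end

section
/- (Theorem 5, distilled) Fix integers n, m ≥ 1, a real ε with 0 ≤ ε < 1, functions f_1,…,f_m : ℝ^n → ℝ, each f_i Lipschitz with constant L_i ≥ 0 (Euclidean norm), and F = (f_1,…,f_m). Let B_1,…,B_N ⊆ ℝ^n be finitely many boxes, each of diameter ‖ω(B_j)‖ ≤ ω, and define l^j ∈ ℝ^m by l^j_i = f_i(m(B_j)) − (L_i/2)·‖ω(B_j)‖. Assume the lower bound set is non-ε-dominated: for all j ≠ j', not l^j ≤_ε l^{j'}. Let x̃ = m(B_J) be the midpoint of one of the boxes and let ε' be a real with ε' > (ω/2)·max_{i} L_i. Then x̃ is ε'-efficient on Ω = B_1 ∪ … ∪ B_N: there is no x ∈ Ω with f_i(x) ≤ f_i(x̃) − ε' for all i. -/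
lemma norm_le_norm_of_abs_le {n : ℕ} (u v : EuclideanSpace ℝ (Fin n))
    (h : ∀ k, |u k| ≤ |v k|) : ‖u‖ ≤ ‖v‖ := by
  rw [EuclideanSpace.norm_eq, EuclideanSpace.norm_eq]
  apply Real.sqrt_le_sqrt
  apply Finset.sum_le_sum
  intro k _
  simp only [Real.norm_eq_abs]
  exact pow_le_pow_left₀ (abs_nonneg _) (h k) 2

/-- Theorem 5, distilled: with `0 ≤ ε < 1`, `f_i` Lipschitz with
constant `L_i ≥ 0`, boxes `B_1,…,B_N` of diameter at most `ω`, Lipschitz lower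
bounds `l^j_i = f_i(m(B_j)) − (L_i/2)·‖ω(B_j)‖` forming a non-ε-dominated set,
`x̃ = m(B_J)` the midpoint of one of the boxes, and `ε' > (ω/2)·max_i L_i`, the
point `x̃` is ε'-efficient on `Ω = B_1 ∪ … ∪ B_N`: there is no `x ∈ Ω` with
`f_i(x) ≤ f_i(x̃) − ε'` for all `i`. -/
theorem stmt_14 (n m N : ℕ) (hn : 1 ≤ n) (hm : 1 ≤ m) (hN : 0 < N)
    (ε : ℝ) (hε0 : 0 ≤ ε) (hε1 : ε < 1)
    (f : Fin m → EuclideanSpace ℝ (Fin n) → ℝ) (L : Fin m → ℝ)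
    (hL : ∀ i, 0 ≤ L i)
    (hLip : ∀ i x y, |f i x - f i y| ≤ L i * ‖x - y‖)
    (a b : Fin N → EuclideanSpace ℝ (Fin n)) (hab : ∀ j k, a j k ≤ b j k)
    (ω : ℝ) (hω : ∀ j, ‖b j - a j‖ ≤ ω)
    (l : Fin N → (Fin m → ℝ))
    (hl : ∀ j i, l j i = f i ((1 / 2 : ℝ) • (a j + b j)) - L i / 2 * ‖b j - a j‖)
    (hnondom : ∀ j j', j ≠ j' → ¬ leps m ε (l j) (l j'))
    (J : Fin N) (ε' : ℝ) (hε' : ∀ i, ω / 2 * L i < ε') :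
    ¬ ∃ x : EuclideanSpace ℝ (Fin n),
        (∃ j, ∀ k, a j k ≤ x k ∧ x k ≤ b j k) ∧
        (∀ i, f i x ≤ f i ((1 / 2 : ℝ) • (a J + b J)) - ε') := by
  rintro ⟨x, ⟨j, hj⟩, hdom⟩
  -- midpoint bound: ‖x - m(B_j)‖ ≤ ‖b j - a j‖ / 2
  have hxm : ‖x - (1 / 2 : ℝ) • (a j + b j)‖ ≤ ‖b j - a j‖ / 2 := by
    have h1 : ‖x - (1 / 2 : ℝ) • (a j + b j)‖ ≤ ‖(1 / 2 : ℝ) • (b j - a j)‖ := by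
      apply norm_le_norm_of_abs_le
      intro k
      have h2 := (hj k).1
      have h3 := (hj k).2
      have h4 := hab j k
      simp only [PiLp.sub_apply, PiLp.smul_apply, PiLp.add_apply, smul_eq_mul]
      rw [abs_of_nonneg (show (0:ℝ) ≤ 1 / 2 * (b j k - a j k) by linarith), abs_le]
      constructor <;> linarith
    have h5 : ‖(1 / 2 : ℝ) • (b j - a j)‖ = ‖b j - a j‖ / 2 := by
      rw [norm_smul, Real.norm_eq_abs, abs_of_nonneg (show (0:ℝ) ≤ 1 / 2 by norm_num)]
      ring
    linarith [h1, h5.le, h5.ge]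
  have key : ∀ i, l j i < l J i := by
    intro i
    have hf := hLip i ((1 / 2 : ℝ) • (a j + b j)) x
    have habs := abs_le.1 hf
    have hnr : ‖(1 / 2 : ℝ) • (a j + b j) - x‖ = ‖x - (1 / 2 : ℝ) • (a j + b j)‖ :=
      norm_sub_rev _ _
    have hmul : L i * ‖x - (1 / 2 : ℝ) • (a j + b j)‖ ≤ L i * (‖b j - a j‖ / 2) :=
      mul_le_mul_of_nonneg_left hxm (hL i)
    have h2 := hdom i
    have h3 := hε' i
    have h4 : ‖b J - a J‖ / 2 * L i ≤ ω / 2 * L i := by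
      have := hω J
      nlinarith [hL i]
    rw [hl j i, hl J i]
    rw [hnr] at habs
    linarith [habs.1, habs.2]
  have i0 : Fin m := ⟨0, hm⟩
  by_cases hjJ : j = J
  · exact absurd (key i0) (by rw [hjJ]; exact lt_irrefl _)
  · apply hnondom j J hjJ
    constructor
    · intro i
      have hpos : ∀ t, 0 < l J t - l j t := fun t => sub_pos.2 (key t)
      have hsum : 0 ≤ ∑ t ∈ Finset.univ.erase i, (l J t - l j t) :=
        Finset.sum_nonneg fun t _ => (hpos t).le
      have hmul := mul_nonneg hε0 hsum
      have hi := hpos i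
      show 0 ≤ Tmap m ε (l J - l j) i
      unfold Tmap
      simp only [Pi.sub_apply]
      linarith
    · intro h
      have h0 : (l J - l j) i0 = 0 := by rw [Set.mem_singleton_iff.mp h]; rfl
      have := key i0
      simp only [Pi.sub_apply] at h0
      linarith
end
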